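/- Let p be an odd prime, R = F_p[u]/(u^2), and θ an automorphism of R. The polynomial x^n − 1 factors in F_p[x] as x^n − 1 = f₁(x)·g₁(x) if and only if there exist f₂(x), g₂(x) ∈ F_p[x] such that x^n − 1 = (f₁(x) + u f₂(x)) ∗ (g₁(x) + u g₂(x)) in R[x;θ]. -/

import Mathlib

/-! Every ring automorphism `θ` of `F_p[u]/(u²)` fixes `F_p` (its elements are integer casts) and
preserves residues modulo `u` (the residue of `θ u` is nilpotent in the field `F_p`). So `F_p[x]`
embeds in `R[x;θ]` as a subring, which gives the forward direction with `f₂ = g₂ = 0`; and reduction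
modulo `u` is a ring homomorphism `R[x;θ] → F_p[x]` killing `u` and left inverse to that embedding,
which turns a skew factorisation of `x^n - 1` back into `x^n - 1 = f₁ g₁`. -/

open TrivSqZeroExt

theorem RingAut.one_apply' {R : Type*} [Ring R] (b : R) : (1 : RingAut R) b = b := rfl

/-- The skew polynomial ring `R[x;θ]`, as finitely supported coefficient
sequences with multiplication twisted by the ring automorphism `θ`:
`(a x^i) * (b x^j) = a θ^i(b) x^{i+j}`. -/
def SkewPoly (R : Type*) [Ring R] (θ : RingAut R) : Type _ := ℕ →₀ R

namespace SkewPoly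

variable {R : Type*} [Ring R] (θ : RingAut R)

/-- The skew-twisted convolution product. -/
noncomputable def mulAux (f g : ℕ →₀ R) : ℕ →₀ R :=
  f.sum fun i a => g.sum fun j b => Finsupp.single (i + j) (a * (θ ^ i) b)

theorem mulAux_zero_left (g : ℕ →₀ R) : mulAux θ 0 g = 0 := Finsupp.sum_zero_index

theorem mulAux_zero_right (f : ℕ →₀ R) : mulAux θ f 0 = 0 := by
  simp [mulAux, Finsupp.sum_zero_index]

theorem mulAux_add_left (f f' g : ℕ →₀ R) :
    mulAux θ (f + f') g = mulAux θ f g + mulAux θ f' g := by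
  unfold mulAux
  apply Finsupp.sum_add_index' <;> intros <;> simp [add_mul, Finsupp.single_add, Finsupp.sum_add]

theorem mulAux_add_right (f g g' : ℕ →₀ R) :
    mulAux θ f (g + g') = mulAux θ f g + mulAux θ f g' := by
  unfold mulAux
  rw [← Finsupp.sum_add]
  apply Finsupp.sum_congr
  intro i _
  apply Finsupp.sum_add_index' <;> intros <;> simp [mul_add, Finsupp.single_add]

theorem one_mulAux (g : ℕ →₀ R) : mulAux θ (Finsupp.single 0 1) g = g := by
  unfold mulAux
  rw [Finsupp.sum_single_index]
  · simp [RingAut.one_apply', Finsupp.sum_single]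
  · simp

theorem mulAux_one (f : ℕ →₀ R) : mulAux θ f (Finsupp.single 0 1) = f := by
  unfold mulAux
  have : ∀ i ∈ f.support, ((Finsupp.single 0 1 : ℕ →₀ R).sum fun j b =>
      Finsupp.single (i + j) (f i * (θ ^ i) b)) = Finsupp.single i (f i) := by
    intro i _
    rw [Finsupp.sum_single_index] <;> simp
  rw [Finsupp.sum_congr this, Finsupp.sum_single f]

theorem mulAux_single_single (i j : ℕ) (a b : R) :
    mulAux θ (Finsupp.single i a) (Finsupp.single j b) =
      Finsupp.single (i + j) (a * (θ ^ i) b) := by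
  unfold mulAux
  rw [Finsupp.sum_single_index, Finsupp.sum_single_index]
  · simp
  · rw [Finsupp.sum_single_index] <;> simp

theorem mulAux_assoc (f g h : ℕ →₀ R) :
    mulAux θ (mulAux θ f g) h = mulAux θ f (mulAux θ g h) := by
  induction f using Finsupp.induction_linear with
  | zero => simp [mulAux_zero_left]
  | add f f' hf hf' => simp [mulAux_add_left, hf, hf']
  | single i a =>
    induction g using Finsupp.induction_linear with
    | zero => simp [mulAux_zero_left, mulAux_zero_right]
    | add g g' hg hg' => simp [mulAux_add_left, mulAux_add_right, hg, hg']
    | single j b =>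
      induction h using Finsupp.induction_linear with
      | zero => simp [mulAux_zero_right]
      | add h h' hh hh' => simp [mulAux_add_right, hh, hh']
      | single k c =>
        rw [mulAux_single_single, mulAux_single_single, mulAux_single_single,
          mulAux_single_single]
        rw [add_assoc, mul_assoc, map_mul, pow_add]
        rfl

variable {θ}

noncomputable instance : AddCommGroup (SkewPoly R θ) := inferInstanceAs (AddCommGroup (ℕ →₀ R))

/-- Reinterpret a skew polynomial as a finitely supported function. -/
def toFinsupp (f : SkewPoly R θ) : ℕ →₀ R := f

/-- Build a skew polynomial out of a finitely supported function. -/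
def ofFinsupp (f : ℕ →₀ R) : SkewPoly R θ := f

noncomputable instance : Ring (SkewPoly R θ) where
  __ := (inferInstance : AddCommGroup (ℕ →₀ R))
  mul f g := mulAux θ (toFinsupp f) (toFinsupp g)
  one := Finsupp.single 0 1
  left_distrib f g h := mulAux_add_right θ (toFinsupp f) (toFinsupp g) (toFinsupp h)
  right_distrib f g h := mulAux_add_left θ (toFinsupp f) (toFinsupp g) (toFinsupp h)
  zero_mul := mulAux_zero_left θ
  mul_zero := mulAux_zero_right θ
  mul_assoc := mulAux_assoc θ
  one_mul := one_mulAux θ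
  mul_one := mulAux_one θ

variable (θ) in
/-- The constant skew polynomial `a`. -/
noncomputable def C (a : R) : SkewPoly R θ := ofFinsupp (Finsupp.single 0 a)

variable (θ) in
/-- The variable `x` of the skew polynomial ring. -/
noncomputable def X : SkewPoly R θ := ofFinsupp (Finsupp.single 1 1)

/-- The `n`-th coefficient of a skew polynomial. -/
def coeff (f : SkewPoly R θ) (n : ℕ) : R := toFinsupp f n

/-- The degree of a skew polynomial (`⊥` for the zero polynomial). -/
def degree (f : SkewPoly R θ) : WithBot ℕ := (toFinsupp f).support.max

/-- The degree of a skew polynomial as a natural number. -/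
def natDegree (f : SkewPoly R θ) : ℕ := WithBot.unbotD 0 (degree f)

/-- The leading coefficient of a skew polynomial. -/
def leadingCoeff (f : SkewPoly R θ) : R := coeff f (natDegree f)

/-- A skew polynomial is monic if its leading coefficient is `1`. -/
def Monic (f : SkewPoly R θ) : Prop := leadingCoeff f = 1

end SkewPoly

/-- The inclusion of `F_p[x]` into the skew polynomial ring
`(F_p + u F_p)[x;θ]` (coefficientwise `a ↦ a + u·0`); this is the natural
embedding of `F_p[x]` as a subring of `R[x;θ]` since `θ` fixes `F_p`. -/
noncomputable def SkewPoly.ofPoly {p : ℕ}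
    (θ : RingAut (DualNumber (ZMod p))) (f : Polynomial (ZMod p)) :
    SkewPoly (DualNumber (ZMod p)) θ :=
  SkewPoly.ofFinsupp
    (Finsupp.mapRange (inl : ZMod p → DualNumber (ZMod p)) (inl_zero (ZMod p)) f.toFinsupp.coeff)

/-- Reduction of a skew polynomial over `F_p + u F_p` modulo `u`, i.e. the
polynomial in `F_p[x]` whose coefficients are the first components of the
coefficients. -/
noncomputable def SkewPoly.fstPoly {p : ℕ}
    {θ : RingAut (DualNumber (ZMod p))} (f : SkewPoly (DualNumber (ZMod p)) θ) :
    Polynomial (ZMod p) :=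
  Polynomial.ofFinsupp (AddMonoidAlgebra.ofCoeff (Finsupp.mapRange TrivSqZeroExt.fst fst_zero (SkewPoly.toFinsupp f)))

namespace SkewPoly

variable {R : Type*} [Ring R] {θ : RingAut R}

theorem ofFinsupp_add (f g : ℕ →₀ R) :
    (ofFinsupp (f + g) : SkewPoly R θ) = ofFinsupp f + ofFinsupp g := rfl

theorem toFinsupp_ofFinsupp (f : ℕ →₀ R) : toFinsupp (ofFinsupp f : SkewPoly R θ) = f := rfl

theorem toFinsupp_zero : toFinsupp (0 : SkewPoly R θ) = 0 := rfl

theorem toFinsupp_add (f g : SkewPoly R θ) : toFinsupp (f + g) = toFinsupp f + toFinsupp g := rfl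

theorem one_def : (1 : SkewPoly R θ) = ofFinsupp (Finsupp.single 0 1) := rfl

@[elab_as_elim]
theorem induction_linear {motive : SkewPoly R θ → Prop} (f : SkewPoly R θ) (zero : motive 0)
    (add : ∀ f g, motive f → motive g → motive (f + g))
    (single : ∀ n a, motive (ofFinsupp (Finsupp.single n a))) : motive f :=
  Finsupp.induction_linear (motive := motive) f zero add single

theorem ofFinsupp_single_mul_ofFinsupp_single (i j : ℕ) (a b : R) :
    (ofFinsupp (Finsupp.single i a) * ofFinsupp (Finsupp.single j b) : SkewPoly R θ) =
      ofFinsupp (Finsupp.single (i + j) (a * (θ ^ i) b)) :=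
  mulAux_single_single θ i j a b

end SkewPoly

namespace DualNumber

open TrivSqZeroExt

theorem fst_map_of_map_inl {R F : Type*} [CommRing R] [IsReduced R] [FunLike F R[ε] R[ε]]
    [RingHomClass F R[ε] R[ε]] (φ : F) (hφ : ∀ a, φ (inl a) = inl a) (x : R[ε]) :
    (φ x).fst = x.fst := by
  have hnil : IsNilpotent (φ (inr x.snd)).fst := by
    refine ⟨2, ?_⟩
    rw [pow_two, ← fst_mul, ← map_mul, inr_mul_inr, map_zero, fst_zero]
  rw [← inl_fst_add_inr_snd_eq x, map_add, hφ, fst_add, hnil.eq_zero, fst_add, fst_inl, fst_inr]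

theorem map_inl_zmod {p : ℕ} {F : Type*} [FunLike F (ZMod p)[ε] (ZMod p)[ε]]
    [RingHomClass F (ZMod p)[ε] (ZMod p)[ε]] (φ : F) (a : ZMod p) : φ (inl a) = inl a := by
  rw [← ZMod.intCast_zmod_cast a, inl_intCast, map_intCast]

end DualNumber

namespace SkewPoly

open TrivSqZeroExt

variable {p : ℕ} {θ : RingAut (DualNumber (ZMod p))}

theorem ofPoly_add (f g : Polynomial (ZMod p)) : ofPoly θ (f + g) = ofPoly θ f + ofPoly θ g := by
  rw [ofPoly, Polynomial.toFinsupp_add, AddMonoidAlgebra.coeff_add,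
    Finsupp.mapRange_add (inl_add _), ofFinsupp_add]
  rfl

theorem ofPoly_monomial (k : ℕ) (a : ZMod p) :
    ofPoly θ (Polynomial.monomial k a) = ofFinsupp (Finsupp.single k (inl a)) := by
  rw [ofPoly, Polynomial.toFinsupp_monomial, AddMonoidAlgebra.coeff_single, Finsupp.mapRange_single]

theorem ofPoly_mul (f g : Polynomial (ZMod p)) : ofPoly θ (f * g) = ofPoly θ f * ofPoly θ g := by
  induction f using Polynomial.induction_on' with
  | add u v hu hv => rw [add_mul, ofPoly_add, hu, hv, ofPoly_add, add_mul]
  | monomial i a =>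
    induction g using Polynomial.induction_on' with
    | add u v hu hv => rw [mul_add, ofPoly_add, hu, hv, ofPoly_add, mul_add]
    | monomial j b =>
      rw [Polynomial.monomial_mul_monomial, ofPoly_monomial, ofPoly_monomial, ofPoly_monomial,
        ofFinsupp_single_mul_ofFinsupp_single, DualNumber.map_inl_zmod, inl_mul]

theorem ofPoly_one : ofPoly θ (1 : Polynomial (ZMod p)) = 1 := by
  rw [← Polynomial.monomial_zero_one, ofPoly_monomial, inl_one, one_def]

theorem ofPoly_zero : ofPoly θ (0 : Polynomial (ZMod p)) = 0 := by
  rw [← Polynomial.monomial_zero_right 0, ofPoly_monomial, inl_zero, Finsupp.single_zero]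
  rfl

variable (θ) in
noncomputable def ofPolyRingHom : Polynomial (ZMod p) →+* SkewPoly (DualNumber (ZMod p)) θ where
  toFun := ofPoly θ
  map_one' := ofPoly_one
  map_mul' := ofPoly_mul
  map_zero' := ofPoly_zero
  map_add' := ofPoly_add

theorem ofPolyRingHom_apply (f : Polynomial (ZMod p)) : ofPolyRingHom θ f = ofPoly θ f := rfl

theorem ofPoly_X : ofPoly θ (Polynomial.X : Polynomial (ZMod p)) = X θ := by
  rw [← Polynomial.monomial_one_one_eq_X, ofPoly_monomial, inl_one]
  rfl

theorem X_pow_sub_one_eq_ofPoly (n : ℕ) :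
    X θ ^ n - 1 = ofPoly θ (Polynomial.X ^ n - 1 : Polynomial (ZMod p)) := by
  rw [← ofPolyRingHom_apply, map_sub, map_pow, map_one, ofPolyRingHom_apply, ofPoly_X]
  exact rfl

theorem fstPoly_zero : fstPoly (0 : SkewPoly (DualNumber (ZMod p)) θ) = 0 := by
  rw [fstPoly, toFinsupp_zero, Finsupp.mapRange_zero]
  rfl

theorem fstPoly_add (f g : SkewPoly (DualNumber (ZMod p)) θ) :
    fstPoly (f + g) = fstPoly f + fstPoly g := by
  rw [fstPoly, toFinsupp_add, Finsupp.mapRange_add fst_add, AddMonoidAlgebra.ofCoeff_add,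
    Polynomial.ofFinsupp_add]
  rfl

theorem fstPoly_ofFinsupp_single (k : ℕ) (c : DualNumber (ZMod p)) :
    fstPoly (ofFinsupp (Finsupp.single k c) : SkewPoly _ θ) = Polynomial.monomial k c.fst := by
  rw [fstPoly, toFinsupp_ofFinsupp, Finsupp.mapRange_single, AddMonoidAlgebra.ofCoeff_single,
    Polynomial.ofFinsupp_single]

theorem fstPoly_mul [IsReduced (ZMod p)] (f g : SkewPoly (DualNumber (ZMod p)) θ) :
    fstPoly (f * g) = fstPoly f * fstPoly g := by
  induction f using induction_linear with
  | zero => rw [zero_mul, fstPoly_zero, zero_mul]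
  | add u v hu hv => rw [add_mul, fstPoly_add, fstPoly_add, hu, hv, add_mul]
  | single i a =>
    induction g using induction_linear with
    | zero => rw [mul_zero, fstPoly_zero, mul_zero]
    | add u v hu hv => rw [mul_add, fstPoly_add, fstPoly_add, hu, hv, mul_add]
    | single j b =>
      rw [ofFinsupp_single_mul_ofFinsupp_single, fstPoly_ofFinsupp_single, fstPoly_ofFinsupp_single,
        fstPoly_ofFinsupp_single, Polynomial.monomial_mul_monomial, fst_mul,
        DualNumber.fst_map_of_map_inl _ (DualNumber.map_inl_zmod _)]

theorem fstPoly_ofPoly (f : Polynomial (ZMod p)) : fstPoly (ofPoly θ f) = f := by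
  induction f using Polynomial.induction_on' with
  | add u v hu hv => rw [ofPoly_add, fstPoly_add, hu, hv]
  | monomial k a => rw [ofPoly_monomial, fstPoly_ofFinsupp_single, fst_inl]

theorem fstPoly_C_eps : fstPoly (C θ (DualNumber.eps : DualNumber (ZMod p))) = 0 := by
  rw [C, fstPoly_ofFinsupp_single, DualNumber.fst_eps, Polynomial.monomial_zero_right]

end SkewPoly

open SkewPoly DualNumber in
theorem skew_factorization_general (p : ℕ) (hp : p.Prime)
    (θ : RingAut (DualNumber (ZMod p))) (n : ℕ)
    (f₁ g₁ : Polynomial (ZMod p)) :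
    (Polynomial.X ^ n - 1 = f₁ * g₁) ↔
      ∃ f₂ g₂ : Polynomial (ZMod p),
        SkewPoly.X θ ^ n - 1 =
          (SkewPoly.ofPoly θ f₁ + SkewPoly.C θ ε * SkewPoly.ofPoly θ f₂) *
          (SkewPoly.ofPoly θ g₁ + SkewPoly.C θ ε * SkewPoly.ofPoly θ g₂) := by
  have : Fact p.Prime := ⟨hp⟩
  rw [X_pow_sub_one_eq_ofPoly]
  constructor
  · intro h
    refine ⟨0, 0, ?_⟩
    rw [h, ofPoly_zero, mul_zero, add_zero, add_zero, ofPoly_mul]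
  · rintro ⟨f₂, g₂, h⟩
    simpa only [fstPoly_ofPoly, fstPoly_mul, fstPoly_add, fstPoly_C_eps, zero_mul, add_zero]
      using congrArg fstPoly h

open SkewPoly DualNumber in
/-- `x^n - 1` factors in `F_p[x]` as `f₁·g₁` iff `x^n - 1` factors in
`R[x;θ]` as `(f₁ + u f₂) ∗ (g₁ + u g₂)` for some `f₂, g₂ ∈ F_p[x]`. -/
theorem skew_factorization (p : ℕ) (hp : p.Prime) (hodd : p ≠ 2)
    (θ : RingAut (DualNumber (ZMod p))) (n : ℕ) (hn : 0 < n)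
    (f₁ g₁ : Polynomial (ZMod p)) :
    (Polynomial.X ^ n - 1 = f₁ * g₁) ↔
      ∃ f₂ g₂ : Polynomial (ZMod p),
        SkewPoly.X θ ^ n - 1 =
          (SkewPoly.ofPoly θ f₁ + SkewPoly.C θ ε * SkewPoly.ofPoly θ f₂) *
          (SkewPoly.ofPoly θ g₁ + SkewPoly.C θ ε * SkewPoly.ofPoly θ g₂) :=
  skew_factorization_general p hp θ n f₁ g₁
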